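/- arXiv:2605.10006 — 5 statements merged into one kernel-verified Lean document; each statement's English description precedes it below -/
import Mathlib

section
/- For 0 < a < 1 and φ ∈ ℝ, the double series identity ∑_{n=1}^∞ (a^{2n}/(n(1−a^{2n}))) cos(nφ) = −(1/2) ∑_{m=1}^∞ log(1 − 2a^{2m} cos φ + a^{4m}) holds, with both series absolutely convergent. -/
/-!
Put `q = a²`. Expanding `1 / (1 - q^(n+1))` as a geometric series turns the left-hand side into
the double series `∑ₙ ∑ₘ q^((n+1)(m+1)) cos((n+1)φ) / (n+1)`, which is absolutely summable since
its terms are bounded by `qⁿ qᵐ`. Summing it in the other order, the `m`-th inner sum is the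
Fourier series of `-(1/2) log (1 - 2 s cos φ + s²)` at `s = q^(m+1)`, which is the real part of
`-log (1 - s e^{iφ})`. Both absolute summability claims come from the absolutely summable double
series, whose rows and columns sum to the two series.
-/

open Real

lemma re_ofReal_mul_exp_pow_succ_div (s φ : ℝ) (n : ℕ) :
    ((s * Complex.exp (φ * Complex.I)) ^ (n + 1) / (n + 1) : ℂ).re
      = s ^ (n + 1) / (n + 1) * cos ((n + 1) * φ) := by
  have : (s * Complex.exp (φ * Complex.I)) ^ (n + 1) / (n + 1)
      = ((s ^ (n + 1) / (n + 1) : ℝ) : ℂ) * Complex.exp (((n + 1) * φ : ℝ) * Complex.I) := by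
    rw [mul_pow, ← Complex.exp_nat_mul]
    push_cast
    ring_nf
  rw [this, Complex.re_ofReal_mul, Complex.exp_ofReal_mul_I_re]

lemma normSq_one_sub_ofReal_mul_exp (s φ : ℝ) :
    Complex.normSq (1 - s * Complex.exp (φ * Complex.I)) = 1 - 2 * s * cos φ + s ^ 2 := by
  rw [Complex.normSq_apply]
  simp only [Complex.sub_re, Complex.sub_im, Complex.one_re, Complex.one_im,
    Complex.re_ofReal_mul, Complex.im_ofReal_mul, Complex.exp_ofReal_mul_I_re,
    Complex.exp_ofReal_mul_I_im]
  linear_combination s ^ 2 * sin_sq_add_cos_sq φ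

theorem hasSum_pow_succ_div_mul_cos {s : ℝ} (hs : |s| < 1) (φ : ℝ) :
    HasSum (fun n : ℕ => s ^ (n + 1) / (n + 1) * cos ((n + 1) * φ))
      (-(1 / 2) * log (1 - 2 * s * cos φ + s ^ 2)) := by
  set z : ℂ := s * Complex.exp (φ * Complex.I)
  have hz : ‖z‖ < 1 := by simpa [z, Complex.norm_exp_ofReal_mul_I] using hs
  convert Complex.hasSum_re (Complex.hasSum_taylorSeries_neg_log' hz) using 1
  · exact funext fun n => (re_ofReal_mul_exp_pow_succ_div s φ n).symm
  · rw [Complex.neg_re, Complex.log_re, ← normSq_one_sub_ofReal_mul_exp,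
      Complex.normSq_eq_norm_sq, log_pow]
    push_cast
    ring

section DoubleSeries

variable {β γ E : Type*} [NormedAddCommGroup E]

theorem summable_norm_of_hasSum_fiberwise {f : β × γ → E} {g : β → E}
    (hf : Summable fun p => ‖f p‖) (hg : ∀ b, HasSum (fun c => f (b, c)) (g b)) :
    Summable fun b => ‖g b‖ :=
  hf.prod.of_nonneg_of_le (fun _ => norm_nonneg _) fun b =>
    (hg b).norm_le_of_bounded (hf.prod_factor b).hasSum fun _ => le_rfl

theorem tsum_eq_tsum_of_hasSum_fiberwise {f : β × γ → E} {g : β → E} {h : γ → E}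
    (hf : Summable f) (hg : ∀ b, HasSum (fun c => f (b, c)) (g b))
    (hh : ∀ c, HasSum (fun b => f (b, c)) (h c)) :
    ∑' b, g b = ∑' c, h c :=
  calc ∑' b, g b = ∑' p, f p := (hf.hasSum.prod_fiberwise hg).tsum_eq
    _ = ∑' p : γ × β, f p.swap := ((Equiv.prodComm γ β).tsum_eq f).symm
    _ = ∑' c, h c := (hf.prod_symm.hasSum.prod_fiberwise hh).tsum_eq.symm

end DoubleSeries

theorem hasSum_pow_succ {s : ℝ} (hs : |s| < 1) :
    HasSum (fun m : ℕ => s ^ (m + 1)) (s / (1 - s)) := by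
  simpa only [pow_succ', div_eq_mul_inv] using (hasSum_geometric_of_abs_lt_one hs).mul_left s

theorem summable_pow_succ_mul_succ {q : ℝ} (hq0 : 0 ≤ q) (hq1 : q < 1) :
    Summable fun p : ℕ × ℕ => q ^ ((p.1 + 1) * (p.2 + 1)) := by
  have hgeom := summable_geometric_of_lt_one hq0 hq1
  refine (hgeom.mul_of_nonneg hgeom (pow_nonneg hq0) (pow_nonneg hq0)).of_nonneg_of_le
    (fun _ => pow_nonneg hq0 _) fun ⟨n, m⟩ => ?_
  rw [← pow_add]
  exact pow_le_pow_of_le_one hq0 hq1.le (by nlinarith)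

theorem abs_pow_succ_div_mul_cos_le {s : ℝ} (hs : 0 ≤ s) (φ : ℝ) (n : ℕ) :
    |s ^ (n + 1) / (n + 1) * cos ((n + 1) * φ)| ≤ s ^ (n + 1) := by
  rw [abs_mul, abs_div, abs_of_nonneg (pow_nonneg hs _), abs_of_pos (by positivity)]
  calc s ^ (n + 1) / (n + 1) * |cos ((n + 1) * φ)| ≤ s ^ (n + 1) / 1 * 1 := by
        gcongr
        · linarith [n.cast_nonneg (α := ℝ)]
        · exact abs_cos_le_one _
    _ = s ^ (n + 1) := by ring

theorem summable_norm_pow_succ_pow_succ_div_mul_cos {q : ℝ} (hq0 : 0 ≤ q) (hq1 : q < 1)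
    (φ : ℝ) :
    Summable fun p : ℕ × ℕ =>
      ‖(q ^ (p.2 + 1)) ^ (p.1 + 1) / (p.1 + 1) * cos ((p.1 + 1) * φ)‖ :=
  (summable_pow_succ_mul_succ hq0 hq1).of_nonneg_of_le (fun _ => norm_nonneg _) fun ⟨n, _⟩ =>
    (abs_pow_succ_div_mul_cos_le (pow_nonneg hq0 _) φ n).trans_eq (by ring)

theorem hasSum_pow_succ_pow_succ_div_mul_cos {q : ℝ} {n : ℕ} (hq : |q ^ (n + 1)| < 1) (φ : ℝ) :
    HasSum (fun m : ℕ => (q ^ (m + 1)) ^ (n + 1) / (n + 1) * cos ((n + 1) * φ))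
      (q ^ (n + 1) / ((n + 1) * (1 - q ^ (n + 1))) * cos ((n + 1) * φ)) := by
  have hs : 1 - q ^ (n + 1) ≠ 0 := by linarith [(abs_lt.mp hq).2]
  rw [show q ^ (n + 1) / ((n + 1) * (1 - q ^ (n + 1))) * cos ((n + 1) * φ)
      = cos ((n + 1) * φ) / (n + 1) * (q ^ (n + 1) / (1 - q ^ (n + 1))) by field_simp]
  refine ((hasSum_pow_succ hq).mul_left _).congr_fun fun m => ?_
  simp only [← pow_mul, mul_comm (m + 1)]
  ring

theorem stmt_6 (a φ : ℝ) (ha0 : 0 < a) (ha1 : a < 1) :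
    (Summable fun n : ℕ =>
      |a^(2*(n+1)) / ((n+1) * (1 - a^(2*(n+1)))) * Real.cos ((n+1) * φ)|) ∧
    (Summable fun m : ℕ =>
      |Real.log (1 - 2 * a^(2*(m+1)) * Real.cos φ + a^(4*(m+1)))|) ∧
    (∑' n : ℕ, a^(2*(n+1)) / ((n+1) * (1 - a^(2*(n+1)))) * Real.cos ((n+1) * φ))
      = -(1/2) * ∑' m : ℕ, Real.log (1 - 2 * a^(2*(m+1)) * Real.cos φ + a^(4*(m+1))) := by
  have hpow4 (k : ℕ) : a ^ (4 * k) = ((a ^ 2) ^ k) ^ 2 := by ring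
  simp only [hpow4, pow_mul a 2]
  have hq0 : 0 ≤ a ^ 2 := sq_nonneg a
  have hq1 : a ^ 2 < 1 := pow_lt_one₀ ha0.le ha1 two_ne_zero
  generalize a ^ 2 = q at hq0 hq1 ⊢
  have hlt (k : ℕ) : |q ^ (k + 1)| < 1 := by
    rw [abs_of_nonneg (pow_nonneg hq0 _)]
    exact pow_lt_one₀ hq0 hq1 k.succ_ne_zero
  -- `F (n, m)` is the `n`-th Fourier term of the `m`-th logarithm, with `s = q ^ (m + 1)`
  set F : ℕ × ℕ → ℝ := fun p =>
    (q ^ (p.2 + 1)) ^ (p.1 + 1) / (p.1 + 1) * cos ((p.1 + 1) * φ)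
  have hF : Summable fun p => ‖F p‖ := summable_norm_pow_succ_pow_succ_div_mul_cos hq0 hq1 φ
  have hrow (n : ℕ) := hasSum_pow_succ_pow_succ_div_mul_cos (hlt n) φ
  have hcol (m : ℕ) : HasSum (fun n => F (n, m))
      (-(1 / 2) * log (1 - 2 * q ^ (m + 1) * cos φ + (q ^ (m + 1)) ^ 2)) :=
    hasSum_pow_succ_div_mul_cos (hlt m) φ
  refine ⟨?_, ?_, ?_⟩
  · simpa only [Real.norm_eq_abs] using summable_norm_of_hasSum_fiberwise hF hrow
  · refine ((summable_norm_of_hasSum_fiberwise hF.prod_symm hcol).mul_left 2).congr fun m => ?_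
    rw [Real.norm_eq_abs, abs_mul, abs_neg, abs_of_pos one_half_pos]
    ring
  · rw [← tsum_mul_left]
    exact tsum_eq_tsum_of_hasSum_fiberwise hF.of_norm hrow hcol
end

section
/- For each fixed 0 < r < 1, the map c ↦ arccos(2b(c)/(1+b(c)²)) is strictly decreasing on (0, 1−r), where b(c) ∈ (0,1) is determined together with a(c) ∈ (0,1) by the equations c = b(1−a²)/(1−a²b²) and r = a(1−b²)/(1−a²b²); moreover arccos(2b/(1+b²)) → π/2 as c → 0 and arccos(2b/(1+b²)) → 0 as c → 1−r. -/
/-!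
Eliminating `a` from the two defining equations gives `1 + c² - r² = (1 - a²)(1 + b²)/(1 - a²b²)`,
hence `2b/(1 + b²) = 2c/(1 + c² - r²)`. The right-hand side is an explicit function of `c`,
increasing from `0` to `1` on `[0, 1 - r]`, so `arccos` of it decreases from `π/2` to `0`.
-/

open Real Set Filter Topology

theorem one_add_sq_sub_sq_eq {A B c r : ℝ} (hAB : A ^ 2 * B ^ 2 ≠ 1)
    (hc : c = B * (1 - A ^ 2) / (1 - A ^ 2 * B ^ 2))
    (hr : r = A * (1 - B ^ 2) / (1 - A ^ 2 * B ^ 2)) :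
    1 + c ^ 2 - r ^ 2 = (1 - A ^ 2) * (1 + B ^ 2) / (1 - A ^ 2 * B ^ 2) := by
  have hD : 1 - A ^ 2 * B ^ 2 ≠ 0 := sub_ne_zero.2 hAB.symm
  rw [hc, hr, div_pow, div_pow, add_sub_assoc, div_sub_div_same, one_add_div (pow_ne_zero 2 hD),
    div_eq_div_iff (pow_ne_zero 2 hD) hD]
  ring

theorem two_mul_div_one_add_sq_eq {A B c r : ℝ} (hA : A ^ 2 ≠ 1) (hAB : A ^ 2 * B ^ 2 ≠ 1)
    (hc : c = B * (1 - A ^ 2) / (1 - A ^ 2 * B ^ 2))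
    (hr : r = A * (1 - B ^ 2) / (1 - A ^ 2 * B ^ 2)) :
    2 * B / (1 + B ^ 2) = 2 * c / (1 + c ^ 2 - r ^ 2) := by
  have hD : 1 - A ^ 2 * B ^ 2 ≠ 0 := sub_ne_zero.2 hAB.symm
  have hA' : 1 - A ^ 2 ≠ 0 := sub_ne_zero.2 hA.symm
  have hB : 1 + B ^ 2 ≠ 0 := by positivity
  rw [one_add_sq_sub_sq_eq hAB hc hr, hc, div_eq_div_iff hB (div_ne_zero (mul_ne_zero hA' hB) hD)]
  field_simp

section ExplicitCosine

variable {r : ℝ}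

theorem mapsTo_two_mul_div_one_add_sq_sub_sq_Icc (hr0 : 0 ≤ r) (hr1 : r < 1) :
    MapsTo (fun c => 2 * c / (1 + c ^ 2 - r ^ 2)) (Icc 0 (1 - r)) (Icc (-1) 1) := by
  rintro c ⟨hc0, hc1⟩
  have hden : 0 < 1 + c ^ 2 - r ^ 2 := by nlinarith
  refine ⟨by linarith [div_nonneg (by linarith : 0 ≤ 2 * c) hden.le], ?_⟩
  rw [div_le_one hden]
  nlinarith

theorem strictMonoOn_two_mul_div_one_add_sq_sub_sq (hr0 : 0 ≤ r) (hr1 : r < 1) :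
    StrictMonoOn (fun c => 2 * c / (1 + c ^ 2 - r ^ 2)) (Icc 0 (1 - r)) := by
  rintro x ⟨hx0, hx1⟩ y ⟨hy0, hy1⟩ hxy
  have hxy_lt : x * y < (1 - r) ^ 2 := by nlinarith
  -- `y (1 + x² - r²) - x (1 + y² - r²) = (y - x)(1 - r² - xy)`
  have hfactor : 0 < (y - x) * (1 - r ^ 2 - x * y) := mul_pos (by linarith) (by nlinarith)
  rw [div_lt_div_iff₀ (by nlinarith) (by nlinarith)]
  nlinarith

theorem continuousAt_arccos_two_mul_div_one_add_sq_sub_sq {c : ℝ} (hc : 1 + c ^ 2 - r ^ 2 ≠ 0) :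
    ContinuousAt (fun c => arccos (2 * c / (1 + c ^ 2 - r ^ 2))) c :=
  continuous_arccos.continuousAt.comp (ContinuousAt.div (by fun_prop) (by fun_prop) hc)

theorem two_mul_div_one_add_sq_sub_sq_one_sub (hr : r ≠ 1) :
    2 * (1 - r) / (1 + (1 - r) ^ 2 - r ^ 2) = 1 := by
  rw [div_eq_one_iff_eq]
  · ring
  · intro h
    exact hr (by linarith)

end ExplicitCosine

theorem stmt_12 (r : ℝ) (hr0 : 0 < r) (hr1 : r < 1)
    (a b : ℝ → ℝ)
    (hab : ∀ c ∈ Set.Ioo (0:ℝ) (1 - r),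
      a c ∈ Set.Ioo (0:ℝ) 1 ∧ b c ∈ Set.Ioo (0:ℝ) 1 ∧
      c = b c * (1 - (a c)^2) / (1 - (a c)^2 * (b c)^2) ∧
      r = a c * (1 - (b c)^2) / (1 - (a c)^2 * (b c)^2)) :
    StrictAntiOn (fun c => Real.arccos (2 * b c / (1 + (b c)^2))) (Set.Ioo 0 (1 - r)) ∧
    Tendsto (fun c => Real.arccos (2 * b c / (1 + (b c)^2)))
      (𝓝[Set.Ioo (0:ℝ) (1 - r)] 0) (𝓝 (π/2)) ∧
    Tendsto (fun c => Real.arccos (2 * b c / (1 + (b c)^2)))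
      (𝓝[Set.Ioo (0:ℝ) (1 - r)] (1 - r)) (𝓝 0) := by
  set F := fun c : ℝ => arccos (2 * c / (1 + c ^ 2 - r ^ 2))
  have hF : EqOn F (fun c => arccos (2 * b c / (1 + (b c) ^ 2))) (Ioo 0 (1 - r)) := by
    intro c hc
    obtain ⟨⟨ha0, ha1⟩, ⟨hb0, hb1⟩, hc, hr⟩ := hab c hc
    have hab1 : a c ^ 2 * b c ^ 2 < 1 := by
      rw [← mul_pow]
      exact pow_lt_one₀ (by positivity) (mul_lt_one_of_nonneg_of_lt_one_left ha0.le ha1 hb1.le)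
        two_ne_zero
    simp only [F, two_mul_div_one_add_sq_eq (by nlinarith) hab1.ne hc hr]
  have hF_cont : ∀ c₀, 0 ≤ c₀ → ContinuousAt F c₀ := fun c₀ hc₀ =>
    continuousAt_arccos_two_mul_div_one_add_sq_sub_sq (by nlinarith)
  refine ⟨?_, ?_, ?_⟩
  · refine StrictAntiOn.congr ?_ hF
    exact (strictAntiOn_arccos.comp_strictMonoOn
      (strictMonoOn_two_mul_div_one_add_sq_sub_sq hr0.le hr1)
      (mapsTo_two_mul_div_one_add_sq_sub_sq_Icc hr0.le hr1)).mono Ioo_subset_Icc_self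
  · have hF0 : F 0 = π / 2 := by simp [F]
    exact Tendsto.congr' hF.eventuallyEq_nhdsWithin
      (hF0 ▸ (hF_cont 0 le_rfl).tendsto.mono_left nhdsWithin_le_nhds)
  · have hF1 : F (1 - r) = 0 := by
      simp only [F, two_mul_div_one_add_sq_sub_sq_one_sub hr1.ne, arccos_one]
    exact Tendsto.congr' hF.eventuallyEq_nhdsWithin
      (hF1 ▸ (hF_cont (1 - r) (by linarith)).tendsto.mono_left nhdsWithin_le_nhds)
end

section
/- Define g(μ) = (2 + 2μ − 3μ²)/(3μ + 2) for μ > 0 and let μ(k) = (1−k)²/(4k) for 0 < k < 1. Then g(μ(k)) ≤ 0 if and only if k ≤ k* := (5 + 2√7 − 2√(11 + 5√7))/3. -/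
open Real

theorem stmt_13 (g μ : ℝ → ℝ)
    (hg : ∀ x : ℝ, 0 < x → g x = (2 + 2*x - 3*x^2) / (3*x + 2))
    (hμ : ∀ k : ℝ, 0 < k → k < 1 → μ k = (1 - k)^2 / (4*k)) :
    ∀ k : ℝ, 0 < k → k < 1 →
      (g (μ k) ≤ 0 ↔ k ≤ (5 + 2*Real.sqrt 7 - 2*Real.sqrt (11 + 5*Real.sqrt 7)) / 3) := by
  intro k hk0 hk1
  have hs2 : Real.sqrt 7 ^ 2 = 7 := Real.sq_sqrt (by norm_num)
  have hsnn : 0 ≤ Real.sqrt 7 := Real.sqrt_nonneg 7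
  have hs1 : 2 < Real.sqrt 7 := by nlinarith
  have htnn : 0 ≤ Real.sqrt (11 + 5 * Real.sqrt 7) := Real.sqrt_nonneg _
  have ht2 : Real.sqrt (11 + 5 * Real.sqrt 7) ^ 2 = 11 + 5 * Real.sqrt 7 :=
    Real.sq_sqrt (by nlinarith)
  set s := Real.sqrt 7 with hsdef
  set t := Real.sqrt (11 + 5 * s) with htdef
  have h1k : 0 < 1 - k := by linarith
  have hμk : μ k = (1 - k) ^ 2 / (4 * k) := hμ k hk0 hk1
  have hx0 : 0 < μ k := by
    rw [hμk]; exact div_pos (pow_pos h1k 2) (by linarith)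
  rw [hg _ hx0, hμk]
  set X : ℝ := (1 - k) ^ 2 / (4 * k) with hX
  have hXval : X * (4 * k) = (1 - k) ^ 2 := by
    rw [hX]; field_simp
  have hden : (0:ℝ) < 3 * X + 2 := by
    have : 0 < X := by rw [hX]; exact div_pos (pow_pos h1k 2) (by linarith)
    linarith
  -- key quantities
  set U : ℝ := 3 * (1 - k) ^ 2 - 4 * k * (1 + s) with hU
  have hV : 0 < 3 * (1 - k) ^ 2 - 4 * k * (1 - s) := by nlinarith [sq_nonneg (1 - k)]
  -- numerator sign equivalence
  have step1 : (2 + 2 * X - 3 * X ^ 2) / (3 * X + 2) ≤ 0 ↔ 2 + 2 * X - 3 * X ^ 2 ≤ 0 := by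
    constructor
    · intro h
      by_contra h'
      push_neg at h'
      have := div_pos h' hden
      linarith
    · intro h
      exact div_nonpos_of_nonpos_of_nonneg h (le_of_lt hden)
  rw [step1]
  -- clear denominators: 2+2X-3X^2 ≤ 0 ↔ -3*U*(3(1-k)^2-4k(1-s)) ≤ 0 scaled
  have hk2 : (0:ℝ) < (4 * k) ^ 2 := by positivity
  have key : 2 + 2 * X - 3 * X ^ 2 ≤ 0 ↔ 0 ≤ U := by
    have hident : (2 + 2 * X - 3 * X ^ 2) * (3 * (4 * k) ^ 2) =
        -(U * (3 * (1 - k) ^ 2 - 4 * k * (1 - s))) := by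
      linear_combination (24*k) * hXval - 9*(X*(4*k) + (1-k)^2) * hXval - 16*k^2 * hs2
    constructor
    · intro h
      by_contra h'
      push_neg at h'
      nlinarith [mul_pos (neg_pos.mpr h') hV]
    · intro h
      nlinarith [mul_nonneg h (le_of_lt hV)]
  rw [key]
  -- factor U = 3 (k - k*) (k - k₂)
  have hfact : U = 3 * (k - (5 + 2*s - 2*t)/3) * (k - (5 + 2*s + 2*t)/3) := by
    rw [hU]
    linear_combination (-4/3) * hs2 + (4/3) * ht2
  have hk2big : k - (5 + 2*s + 2*t)/3 < 0 := by nlinarith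
  rw [hfact]
  constructor
  · intro h
    by_contra h'
    push_neg at h'
    have h1 : 0 < k - (5 + 2*s - 2*t)/3 := by linarith
    nlinarith [mul_pos h1 (neg_pos.mpr hk2big)]
  · intro h
    have h1 : 0 ≤ (5 + 2*s - 2*t)/3 - k := by linarith
    nlinarith [mul_nonneg h1 (le_of_lt (neg_pos.mpr hk2big))]
end

section
/- Let f(u,v) = (k₀ + γ₀ u²/(1+u²)) v − u with γ₀ > 8k₀ > 0. Then there exists a nonempty open interval of values v > 0 for which the equation f(u,v) = 0 has exactly three nonnegative solutions in u. -/
open Set Polynomial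

set_option maxHeartbeats 2000000 in
theorem stmt_18 (k₀ γ₀ : ℝ) (hk : 0 < k₀) (hγ : 8*k₀ < γ₀)
    (f : ℝ → ℝ → ℝ)
    (hf : ∀ u v : ℝ, f u v = (k₀ + γ₀ * u^2 / (1 + u^2)) * v - u) :
    ∃ v₁ v₂ : ℝ, 0 < v₁ ∧ v₁ < v₂ ∧
      ∀ v ∈ Set.Ioo v₁ v₂, {u : ℝ | 0 ≤ u ∧ f u v = 0}.ncard = 3 := by
  set c := k₀ + γ₀ with hc
  have hc0 : 0 < c := by simp only [hc]; linarith
  set δ := γ₀ - 8*k₀ with hδdef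
  have hδ : 0 < δ := by simp only [hδdef]; linarith
  set η := δ / (9*(k₀+δ)) with hηdef
  have hkδ : 0 < k₀ + δ := by linarith
  have hη : 0 < η := by positivity
  have hη9 : η * (9*(k₀+δ)) = δ := by
    rw [hηdef]; field_simp
  set x := 1/3 + η with hxdef
  have hx0 : 0 < x := by positivity
  set b := Real.sqrt x with hbdef
  have hb0 : 0 < b := Real.sqrt_pos.mpr hx0
  have hb2 : b^2 = x := Real.sq_sqrt hx0.le
  set a := 1/(3*b) with hadef
  have ha0 : 0 < a := by positivity
  have hab : a * b = 1/3 := by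
    rw [hadef]; field_simp
  have ha2 : 9 * x * a^2 = 1 := by
    have h : (a*b)^2 = (1/3)^2 := by rw [hab]
    nlinarith [h, hb2]
  have haltb : a < b := by
    have h1 : 1 < 3 * b^2 := by rw [hb2, hxdef]; linarith
    rw [hadef, div_lt_iff₀ (by positivity)]
    nlinarith
  set dA := k₀ + c*a^2 with hdA
  set dB := k₀ + c*b^2 with hdB
  have hdA0 : 0 < dA := by positivity
  have hdB0 : 0 < dB := by positivity
  have hcδ : c = 9*k₀ + δ := by rw [hc, hδdef]; ring
  clear_value dB dA a b x η δ c
  refine ⟨(b + b^3)/dB, (a + a^3)/dA, by positivity, ?_, ?_⟩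
  · -- v₁ < v₂
    rw [div_lt_div_iff₀ hdB0 hdA0]
    have key : 9*k₀*η^2 < 2*δ*x := by
      rw [hxdef]
      nlinarith [hη9, mul_pos hη hkδ, mul_pos (mul_pos hη hη) hk,
        mul_pos (mul_pos hη hη) hδ, mul_pos hη hδ, mul_pos hη hk]
    have hT : (2*c/9 - k₀*(4/3 + a^2 + b^2))*(9*x) = 2*δ*x - 9*k₀*η^2 := by
      rw [hcδ, hb2]
      linear_combination (-k₀)*ha2 + (-9*k₀*(x-1/3+η))*hxdef
    have hB9 : 0 < (2*c/9 - k₀*(4/3 + a^2 + b^2)) * (9*x) := by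
      rw [hT]; linarith
    have hbracket : 0 < 2*c/9 - k₀*(4/3 + a^2 + b^2) := by
      have h9x : (9:ℝ)*x ≠ 0 := by positivity
      have h := div_pos hB9 (show (0:ℝ) < 9*x by positivity)
      rwa [mul_div_cancel_right₀ _ h9x] at h
    have hident : (a + a^3)*dB - (b + b^3)*dA
        = (b-a)*(2*c/9 - k₀*(4/3 + a^2 + b^2)) := by
      rw [hdA, hdB]
      linear_combination ((b-a)*(-k₀ - c*(a*b - 2/3)))*hab
    linarith [hident, mul_pos (sub_pos.mpr haltb) hbracket]
  · intro v hv
    obtain ⟨hv1, hv2⟩ := hv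
    have hv0 : 0 < v := lt_trans (by positivity) hv1
    set p : ℝ → ℝ := fun u => u^3 - c*v*u^2 + u - k₀*v with hp
    have hpval : ∀ u : ℝ, p u = u^3 - c*v*u^2 + u - k₀*v := fun u => rfl
    have hfe : ∀ u : ℝ, f u v = 0 ↔ p u = 0 := by
      intro u
      have h1 : (1:ℝ) + u^2 ≠ 0 := by positivity
      rw [hf u v, hpval u]
      have h2 : (k₀ + γ₀ * u ^ 2 / (1 + u ^ 2)) * v - u
          = -(u^3 - c*v*u^2 + u - k₀*v)/(1+u^2) := by
        rw [hc]
        field_simp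
        ring
      rw [h2, _root_.div_eq_zero_iff, neg_eq_zero]
      simp [h1]
    have hcont : Continuous p := by
      rw [hp]; fun_prop
    have hp0 : p 0 < 0 := by
      rw [hpval]
      nlinarith [mul_pos hk hv0]
    have hpa : 0 < p a := by
      have h := (lt_div_iff₀ hdA0).mp hv2
      rw [hpval]
      rw [hdA] at h
      nlinarith [h]
    have hpb : p b < 0 := by
      have h := (div_lt_iff₀ hdB0).mp hv1
      rw [hpval]
      rw [hdB] at h
      nlinarith [h]
    set M := max b (c*v) + k₀*v + 1 with hM
    have hMb : b < M := by
      have h := le_max_left b (c*v)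
      rw [hM]
      nlinarith [mul_pos hk hv0]
    have hM1 : 1 ≤ M := by
      have h1 : 0 ≤ max b (c*v) := le_trans hb0.le (le_max_left _ _)
      rw [hM]
      nlinarith [mul_pos hk hv0]
    have hpM : 0 < p M := by
      have h1 : c*v + k₀*v + 1 ≤ M := by
        have h := le_max_right b (c*v)
        rw [hM]; linarith
      rw [hpval]
      nlinarith [mul_pos hk hv0, sq_nonneg M, mul_nonneg (mul_pos hv0 hk).le (sub_nonneg.mpr hM1),
        mul_le_mul_of_nonneg_left h1 (by nlinarith : (0:ℝ) ≤ M^2)]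
    obtain ⟨r₁, hr₁mem, hr₁⟩ := intermediate_value_Ioo ha0.le hcont.continuousOn
      (show (0:ℝ) ∈ Set.Ioo (p 0) (p a) from ⟨hp0, hpa⟩)
    obtain ⟨r₂, hr₂mem, hr₂⟩ := intermediate_value_Ioo' haltb.le hcont.continuousOn
      (show (0:ℝ) ∈ Set.Ioo (p b) (p a) from ⟨hpb, hpa⟩)
    obtain ⟨r₃, hr₃mem, hr₃⟩ := intermediate_value_Ioo hMb.le hcont.continuousOn
      (show (0:ℝ) ∈ Set.Ioo (p b) (p M) from ⟨hpb, hpM⟩)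
    set P : Polynomial ℝ := X^3 - C (c*v) * X^2 + X - C (k₀*v) with hP
    have hPdeg : P.natDegree = 3 := by
      rw [hP]; compute_degree!
    have hPne : P ≠ 0 := by
      intro h
      rw [h] at hPdeg
      simp at hPdeg
    have hPeval : ∀ u : ℝ, P.eval u = p u := by
      intro u; rw [hP, hpval]; simp
    set S := {u : ℝ | 0 ≤ u ∧ f u v = 0} with hS
    have hsub : S ⊆ ↑P.roots.toFinset := by
      intro u hu
      simp only [Finset.coe_sort_coe, Multiset.mem_toFinset, Finset.mem_coe]
      rw [mem_roots hPne]
      show P.eval u = 0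
      rw [hPeval]
      exact (hfe u).mp hu.2
    have hfin : S.Finite := Set.Finite.subset (P.roots.toFinset.finite_toSet) hsub
    have hub : S.ncard ≤ 3 := by
      calc S.ncard ≤ (↑P.roots.toFinset : Set ℝ).ncard :=
            Set.ncard_le_ncard hsub (P.roots.toFinset.finite_toSet)
        _ = P.roots.toFinset.card := Set.ncard_coe_finset _
        _ ≤ Multiset.card P.roots := Multiset.toFinset_card_le _
        _ ≤ 3 := by
            have h := P.card_roots'
            rw [hPdeg] at h
            exact_mod_cast h
    have hr₁S : r₁ ∈ S := ⟨hr₁mem.1.le, (hfe r₁).mpr hr₁⟩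
    have hr₂S : r₂ ∈ S := ⟨(lt_trans ha0 hr₂mem.1).le, (hfe r₂).mpr hr₂⟩
    have hr₃S : r₃ ∈ S := ⟨(lt_trans hb0 hr₃mem.1).le, (hfe r₃).mpr hr₃⟩
    have h12 : r₁ ≠ r₂ := ne_of_lt (lt_trans hr₁mem.2 hr₂mem.1)
    have h13 : r₁ ≠ r₃ := ne_of_lt (lt_trans hr₁mem.2 (lt_trans haltb hr₃mem.1))
    have h23 : r₂ ≠ r₃ := ne_of_lt (lt_trans hr₂mem.2 hr₃mem.1)
    have hlb : 3 ≤ S.ncard := by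
      have hsub3 : ({r₁, r₂, r₃} : Set ℝ) ⊆ S := by
        intro u hu
        rcases hu with h | h | h <;> subst h <;> assumption
      have h3card : ({r₁, r₂, r₃} : Set ℝ).ncard = 3 := by
        rw [Set.ncard_insert_of_notMem (by simp [h12, h13])
            ((Set.finite_singleton _).insert _),
          Set.ncard_insert_of_notMem (by simp [h23]) (Set.finite_singleton _),
          Set.ncard_singleton]
      calc 3 = ({r₁, r₂, r₃} : Set ℝ).ncard := h3card.symm
        _ ≤ S.ncard := Set.ncard_le_ncard hsub3 hfin
    omega
end

section
/- Let 0 < k < 1, μ = (1−k)²/(4k), and ρ(θ) = √μ·√(μ+cos²θ)/(μ+sin²θ). For θ* ∈ (0, π/2), the quantity −2ρ″(θ*)/ρ(θ*) + 4(ρ′(θ*)/ρ(θ*))² + 2 cot θ* · ρ′(θ*)/ρ(θ*) equals (2(3μ+2) sin²θ* / ((μ + sin²θ*)(μ + cos²θ*)²)) · (−sin²θ* + g(μ)), where g(μ) = (2 + 2μ − 3μ²)/(3μ + 2). -/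
/-!
Work with the logarithmic derivative `ℓ = ρ'/ρ`, which is
`ℓ(θ) = -sin θ cos θ (1/(μ + cos²θ) + 2/(μ + sin²θ))`. Since `ρ''/ρ = ℓ' + ℓ²`, the quantity
equals `-2ℓ' + 2ℓ² + 2 cot θ · ℓ`, and `ℓ²`, `ℓ'` and `cot θ · ℓ` are all rational functions of
`sin²θ` (using `cos²θ = 1 - sin²θ`); the identity is then checked by clearing denominators,
which is legitimate because `μ > 0`.
-/

open Real Filter Topology

theorem deriv_deriv_eq_mul_sq_add_of_hasDerivAt {f ℓ : ℝ → ℝ} {ℓ' t : ℝ}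
    (hf : ∀ᶠ x in 𝓝 t, HasDerivAt f (f x * ℓ x) x) (hℓ : HasDerivAt ℓ ℓ' t) :
    deriv (deriv f) t = f t * (ℓ t ^ 2 + ℓ') := by
  have hderiv : deriv f =ᶠ[𝓝 t] fun x => f x * ℓ x := hf.mono fun x hx => hx.deriv
  rw [hderiv.deriv_eq, (hf.self_of_nhds.fun_mul hℓ).deriv]
  ring

theorem hasDerivAt_const_add_sin_sq (μ t : ℝ) :
    HasDerivAt (fun θ => μ + sin θ ^ 2) (2 * sin t * cos t) t :=
  (((hasDerivAt_sin t).fun_pow 2).const_add μ).congr_deriv (by ring)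

theorem hasDerivAt_const_add_cos_sq (μ t : ℝ) :
    HasDerivAt (fun θ => μ + cos θ ^ 2) (-(2 * sin t * cos t)) t :=
  (((hasDerivAt_cos t).fun_pow 2).const_add μ).congr_deriv (by ring)

section Rho

variable {μ : ℝ}

noncomputable def rhoLogDeriv (μ θ : ℝ) : ℝ :=
  -(sin θ * cos θ) * (1 / (μ + cos θ ^ 2) + 2 / (μ + sin θ ^ 2))

noncomputable def rhoLogDeriv' (μ θ : ℝ) : ℝ :=
  (sin θ ^ 2 - cos θ ^ 2) * (1 / (μ + cos θ ^ 2) + 2 / (μ + sin θ ^ 2))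
    + 2 * sin θ ^ 2 * cos θ ^ 2 * (2 / (μ + sin θ ^ 2) ^ 2 - 1 / (μ + cos θ ^ 2) ^ 2)

theorem hasDerivAt_rho (hμ : 0 < μ) (a t : ℝ) :
    HasDerivAt (fun θ => a * √(μ + cos θ ^ 2) / (μ + sin θ ^ 2))
      (a * √(μ + cos t ^ 2) / (μ + sin t ^ 2) * rhoLogDeriv μ t) t := by
  have hA : 0 < μ + cos t ^ 2 := by positivity
  have hB : 0 < μ + sin t ^ 2 := by positivity
  refine ((((hasDerivAt_const_add_cos_sq μ t).sqrt hA.ne').const_mul a).fun_div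
    (hasDerivAt_const_add_sin_sq μ t) hB.ne').congr_deriv ?_
  have hsq : √(μ + cos t ^ 2) ^ 2 = μ + cos t ^ 2 := sq_sqrt hA.le
  rw [rhoLogDeriv]
  field_simp
  rw [hsq]
  ring

theorem hasDerivAt_rhoLogDeriv (hμ : 0 < μ) (t : ℝ) :
    HasDerivAt (rhoLogDeriv μ) (rhoLogDeriv' μ t) t := by
  have hA : 0 < μ + cos t ^ 2 := by positivity
  have hB : 0 < μ + sin t ^ 2 := by positivity
  have hsc : HasDerivAt (fun θ => -(sin θ * cos θ)) (-(cos t * cos t + sin t * -sin t)) t :=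
    ((hasDerivAt_sin t).fun_mul (hasDerivAt_cos t)).neg
  have hP := ((hasDerivAt_const t (1 : ℝ)).fun_div (hasDerivAt_const_add_cos_sq μ t) hA.ne').fun_add
    ((hasDerivAt_const t (2 : ℝ)).fun_div (hasDerivAt_const_add_sin_sq μ t) hB.ne')
  refine (hsc.fun_mul hP).congr_deriv ?_
  rw [rhoLogDeriv']
  field_simp
  ring

theorem curvature_rational_identity (hμ : 0 < μ) (x : ℝ) (hx0 : 0 ≤ x) (hx1 : x ≤ 1) :
    -2 * ((2 * x - 1) * (1 / (μ + (1 - x)) + 2 / (μ + x))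
        + 2 * x * (1 - x) * (2 / (μ + x) ^ 2 - 1 / (μ + (1 - x)) ^ 2))
      + 2 * x * (1 - x) * (1 / (μ + (1 - x)) + 2 / (μ + x)) ^ 2
      - 2 * (1 - x) * (1 / (μ + (1 - x)) + 2 / (μ + x))
    = 2 * (3 * μ + 2) * x / ((μ + x) * (μ + (1 - x)) ^ 2)
      * (-x + (2 + 2 * μ - 3 * μ ^ 2) / (3 * μ + 2)) := by
  have h1 : μ + x ≠ 0 := by positivity
  have h2 : μ + (1 - x) ≠ 0 := (by linarith : 0 < μ + (1 - x)).ne'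
  have h3 : 3 * μ + 2 ≠ 0 := by positivity
  field_simp
  ring

theorem rho_curvature_eq (hμ : 0 < μ) {θ : ℝ} (hθ : sin θ ≠ 0) :
    -2 * (rhoLogDeriv μ θ ^ 2 + rhoLogDeriv' μ θ) + 4 * rhoLogDeriv μ θ ^ 2 + 2 * (cos θ / sin θ) * rhoLogDeriv μ θ
    = 2 * (3 * μ + 2) * sin θ ^ 2 / ((μ + sin θ ^ 2) * (μ + cos θ ^ 2) ^ 2)
      * (-sin θ ^ 2 + (2 + 2 * μ - 3 * μ ^ 2) / (3 * μ + 2)) := by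
  have hsq : rhoLogDeriv μ θ ^ 2
      = sin θ ^ 2 * cos θ ^ 2 * (1 / (μ + cos θ ^ 2) + 2 / (μ + sin θ ^ 2)) ^ 2 := by
    rw [rhoLogDeriv]
    ring
  have hcot : cos θ / sin θ * rhoLogDeriv μ θ
      = -cos θ ^ 2 * (1 / (μ + cos θ ^ 2) + 2 / (μ + sin θ ^ 2)) := by
    rw [rhoLogDeriv]
    field_simp
  rw [mul_assoc 2 (cos θ / sin θ), hcot, hsq, rhoLogDeriv', cos_sq']
  convert curvature_rational_identity hμ (sin θ ^ 2) (sq_nonneg _) (sin_sq_le_one θ) using 1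
  ring

end Rho

theorem stmt_19 (k : ℝ) (hk0 : 0 < k) (hk1 : k < 1)
    (μ : ℝ) (hμ : μ = (1 - k)^2 / (4*k))
    (ρ : ℝ → ℝ)
    (hρ : ∀ θ : ℝ, ρ θ = Real.sqrt μ * Real.sqrt (μ + (Real.cos θ)^2) / (μ + (Real.sin θ)^2))
    (g : ℝ) (hg : g = (2 + 2*μ - 3*μ^2) / (3*μ + 2)) :
    ∀ θ : ℝ, 0 < θ → θ < π/2 →
      -2 * deriv (deriv ρ) θ / ρ θ + 4 * (deriv ρ θ / ρ θ)^2
        + 2 * (Real.cos θ / Real.sin θ) * (deriv ρ θ / ρ θ)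
      = (2*(3*μ + 2)*(Real.sin θ)^2 / ((μ + (Real.sin θ)^2)*(μ + (Real.cos θ)^2)^2))
        * (-(Real.sin θ)^2 + g) := by
  intro θ hθ0 hθ1
  have hμ0 : 0 < μ := hμ ▸ div_pos (pow_pos (by linarith) 2) (by linarith)
  have hsin : 0 < sin θ := sin_pos_of_pos_of_lt_pi hθ0 (by linarith [pi_pos])
  have hρ' : ∀ t, HasDerivAt ρ (ρ t * rhoLogDeriv μ t) t := by
    obtain rfl : ρ = _ := funext hρ
    exact hasDerivAt_rho hμ0 √μ
  have hρθ : ρ θ ≠ 0 := by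
    rw [hρ]
    positivity
  have hd1 : deriv ρ θ / ρ θ = rhoLogDeriv μ θ := by
    rw [(hρ' θ).deriv]
    field_simp
  have hd2 : deriv (deriv ρ) θ / ρ θ = rhoLogDeriv μ θ ^ 2 + rhoLogDeriv' μ θ := by
    rw [deriv_deriv_eq_mul_sq_add_of_hasDerivAt (Eventually.of_forall hρ')
      (hasDerivAt_rhoLogDeriv hμ0 θ)]
    field_simp
  rw [mul_div_assoc, hd2, hd1, hg]
  exact rho_curvature_eq hμ0 hsin.ne'
end
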